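/- Let (G,B,w) be a finite weighted graph with boundary and interior Ω, and k ≥ 1. The operator norm of the DtN map T^{(k)}_{dδ} satisfies ‖T^{(k)}_{dδ}‖ ≤ max over k-cliques {u_1,...,u_k} ⊂ Ω of (Σ_{v∈B} w(v,u_1,...,u_k)) / w(u_1,...,u_k). -/

import Mathlib

open scoped Classical

namespace GraphHodge


variable {X : Type*}

/-- A tuple of vertices forms a clique: any two distinct indices give adjacent vertices. -/
def IsTupleClique (G : SimpleGraph X) {m : ℕ} (v : Fin m → X) : Prop :=
  ∀ i j : Fin m, i ≠ j → G.Adj (v i) (v j)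

/-- Indicator function of cliques. -/
noncomputable def cliqueInd (G : SimpleGraph X) {m : ℕ} (v : Fin m → X) : ℝ :=
  if IsTupleClique G v then 1 else 0

/-- A `k`-form on a graph: skew-symmetric and supported on `(k+1)`-cliques. -/
def IsGraphForm (G : SimpleGraph X) (k : ℕ) (α : (Fin (k + 1) → X) → ℝ) : Prop :=
  (∀ v, ¬ IsTupleClique G v → α v = 0) ∧
  ∀ (σ : Equiv.Perm (Fin (k + 1))) (v : Fin (k + 1) → X),
    α (v ∘ σ) = ((Equiv.Perm.sign σ : ℤ) : ℝ) * α v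

/-- The exterior differential of a `k`-form on a graph. -/
noncomputable def gd (G : SimpleGraph X) {k : ℕ} (α : (Fin (k + 1) → X) → ℝ) :
    (Fin (k + 2) → X) → ℝ :=
  fun v => cliqueInd G v * ∑ j : Fin (k + 2), (-1 : ℝ) ^ (j : ℕ) * α (v ∘ j.succAbove)

/-- Tensor product of an `r`-form and an `s`-form on a graph. -/
noncomputable def gtensor (G : SimpleGraph X) {r s : ℕ}
    (α : (Fin (r + 1) → X) → ℝ) (β : (Fin (s + 1) → X) → ℝ) :
    (Fin (r + s + 1) → X) → ℝ :=
  fun v => cliqueInd G v * α (fun i => v ⟨i.1, by have := i.2; omega⟩) *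
    β (fun i => v ⟨r + i.1, by have := i.2; omega⟩)

/-- Skew-symmetrization operator on functions of vertex tuples. -/
noncomputable def skewSym {m : ℕ} (f : (Fin m → X) → ℝ) : (Fin m → X) → ℝ :=
  fun v => ((m.factorial : ℝ))⁻¹ *
    ∑ σ : Equiv.Perm (Fin m), ((Equiv.Perm.sign σ : ℤ) : ℝ) * f (v ∘ σ)

/-- Wedge product of graph forms: skew-symmetrization of the tensor product. -/
noncomputable def gwedge (G : SimpleGraph X) {r s : ℕ}
    (α : (Fin (r + 1) → X) → ℝ) (β : (Fin (s + 1) → X) → ℝ) :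
    (Fin (r + s + 1) → X) → ℝ :=
  skewSym (gtensor G α β)

/-- A positive weight on all cliques of a graph, symmetric in its arguments and
vanishing off cliques. -/
structure GraphWeight (G : SimpleGraph X) where
  w : ∀ {m : ℕ}, (Fin (m + 1) → X) → ℝ
  symm : ∀ {m : ℕ} (σ : Equiv.Perm (Fin (m + 1))) (v : Fin (m + 1) → X), w (v ∘ σ) = w v
  pos : ∀ {m : ℕ} (v : Fin (m + 1) → X), IsTupleClique G v → 0 < w v
  eq_zero : ∀ {m : ℕ} (v : Fin (m + 1) → X), ¬ IsTupleClique G v → w v = 0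

variable {G : SimpleGraph X}

/-- The weighted inner product on `k`-forms of a finite weighted graph. -/
noncomputable def formInner [Fintype X] (w : GraphWeight G) {k : ℕ}
    (α β : (Fin (k + 1) → X) → ℝ) : ℝ :=
  (((k + 1).factorial : ℝ))⁻¹ * ∑ v : Fin (k + 1) → X, α v * β v * w.w v

/-- The codifferential (formal adjoint of `gd`) on a finite weighted graph. -/
noncomputable def gdelta [Fintype X] (w : GraphWeight G) {k : ℕ}
    (α : (Fin (k + 2) → X) → ℝ) : (Fin (k + 1) → X) → ℝ :=
  fun v => (w.w v)⁻¹ * ∑ u : X, α (Fin.cons u v) * w.w (Fin.cons u v)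

/-- `(G, B)` is a graph with boundary `B`: no edges inside `B`, and every boundary
vertex is adjacent to some interior vertex. -/
def IsBoundary (G : SimpleGraph X) (B : Set X) : Prop :=
  (∀ a ∈ B, ∀ b ∈ B, ¬ G.Adj a b) ∧ ∀ b ∈ B, ∃ a, a ∉ B ∧ G.Adj b a

/-- A boundary tuple: a clique whose first vertex is in `B` and the rest interior. -/
def IsBdryTuple (G : SimpleGraph X) (B : Set X) {k : ℕ} (v : Fin (k + 1) → X) : Prop :=
  IsTupleClique G v ∧ v 0 ∈ B ∧ ∀ i : Fin k, v i.succ ∉ B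

/-- A boundary `k`-form: supported on boundary `(k+1)`-cliques and skew-symmetric in
its last `k` variables. -/
def IsBdryForm (G : SimpleGraph X) (B : Set X) (k : ℕ) (φ : (Fin (k + 1) → X) → ℝ) : Prop :=
  (∀ v, ¬ IsBdryTuple G B v → φ v = 0) ∧
  ∀ (σ : Equiv.Perm (Fin k)) (v : Fin (k + 1) → X),
    φ (Fin.cons (v 0) (fun i => v (σ i).succ)) = ((Equiv.Perm.sign σ : ℤ) : ℝ) * φ v

/-- Inner product over tuples entirely inside the interior `Ω = Bᶜ`. -/
noncomputable def innerInt [Fintype X] (w : GraphWeight G) (B : Set X) {k : ℕ}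
    (α β : (Fin (k + 1) → X) → ℝ) : ℝ :=
  (((k + 1).factorial : ℝ))⁻¹ *
    ∑ v : Fin (k + 1) → X, (if ∀ i, v i ∉ B then (1 : ℝ) else 0) * (α v * β v * w.w v)

/-- Boundary inner product: first vertex in `B`, the others interior. -/
noncomputable def innerBdry [Fintype X] (w : GraphWeight G) (B : Set X) {k : ℕ}
    (α β : (Fin (k + 1) → X) → ℝ) : ℝ :=
  ((k.factorial : ℝ))⁻¹ *
    ∑ v : Fin (k + 1) → X,
      (if v 0 ∈ B ∧ ∀ i : Fin k, v i.succ ∉ B then (1 : ℝ) else 0) * (α v * β v * w.w v)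

/-- The normal-trace operator `𝐍` on `(k+1)`-forms. -/
noncomputable def Nop [Fintype X] (w : GraphWeight G) (B : Set X) {k : ℕ}
    (α : (Fin (k + 2) → X) → ℝ) : (Fin (k + 1) → X) → ℝ :=
  fun v => (w.w v)⁻¹ *
    ∑ u : X, (if u ∉ B then (1 : ℝ) else 0) * α (Fin.cons u v) * w.w (Fin.cons u v)

/-- The Dirichlet-trace operator `𝐃`: forget the boundary vertex. -/
def Dop {k : ℕ} (α : (Fin (k + 1) → X) → ℝ) : (Fin (k + 2) → X) → ℝ :=
  fun v => α (fun i => v i.succ)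

lemma w_nonneg {X : Type*} {G : SimpleGraph X} (w : GraphWeight G) {m : ℕ}
    (v : Fin (m+1) → X) : 0 ≤ w.w v := by
  by_cases h : IsTupleClique G v
  · exact (w.pos v h).le
  · exact (w.eq_zero v h).ge

lemma clique_tail {X : Type*} {G : SimpleGraph X} {m : ℕ} {v : Fin (m+2) → X}
    (h : IsTupleClique G v) : IsTupleClique G (Fin.tail v) := by
  intro i j hij
  exact h i.succ j.succ (fun e => hij (Fin.succ_injective _ e))

lemma sum_comp_perm {X : Type*} [Fintype X] {m : ℕ} (σ : Equiv.Perm (Fin m))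
    (F : (Fin m → X) → ℝ) :
    ∑ v : Fin m → X, F (v ∘ σ) = ∑ v : Fin m → X, F v := by
  apply Fintype.sum_bijective (fun v : Fin m → X => v ∘ σ) ?_ _ _ (fun _ => rfl)
  constructor
  · intro a b h
    funext i
    have := congrFun h (σ.symm i)
    simpa using this
  · intro b
    exact ⟨b ∘ σ.symm, by funext i; simp⟩

lemma sum_pi_succ {X : Type*} [Fintype X] {m : ℕ} (F : (Fin (m+1) → X) → ℝ) :
    ∑ v : Fin (m+1) → X, F v = ∑ x : X, ∑ u : Fin m → X, F (Fin.cons x u) := by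
  rw [← Equiv.sum_comp (Fin.consEquiv fun _ => X) F, Fintype.sum_prod_type]
  rfl

lemma esign {n : ℕ} (j : Fin (n+1)) :
    ((Equiv.Perm.sign (Fin.cycleRange j) : ℤ) : ℝ) = (-1:ℝ)^(j:ℕ) := by
  rw [Fin.sign_cycleRange]
  push_cast
  ring

lemma gdelta_mul_self_mul {X : Type*} [Fintype X] {G : SimpleGraph X} (w : GraphWeight G)
    {k : ℕ} (ω : (Fin (k+2) → X) → ℝ) (u : Fin (k+1) → X) :
    gdelta w ω u * gdelta w ω u * w.w u
      = gdelta w ω u * ∑ x : X, ω (Fin.cons x u) * w.w (Fin.cons x u) := by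
  by_cases h : w.w u = 0
  · simp [gdelta, h]
  · have h2 : gdelta w ω u * w.w u = ∑ x : X, ω (Fin.cons x u) * w.w (Fin.cons x u) := by
      simp only [gdelta]
      field_simp
    rw [mul_assoc, h2]

/-- operator norm bound for `T^{(k)}_{dδ}` (here `k + 1 ≥ 1` plays the
role of the paper's `k ≥ 1`):
`‖T_{dδ}‖ ≤ max over interior cliques {u₁,…,u_k} of (∑_{v∈B} w(v,u₁,…,u_k)) / w(u₁,…,u_k)`. -/
theorem dtn_ddelta_norm_bound {X : Type*} [Fintype X] (G : SimpleGraph X) (B : Set X)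
    (hB : IsBoundary G B) (w : GraphWeight G) (k : ℕ)
    (φ : (Fin (k + 2) → X) → ℝ) (hφ : IsBdryForm G B (k + 1) φ)
    (ω : (Fin (k + 2) → X) → ℝ) (hω : IsGraphForm G (k + 1) ω)
    (hharm : ∀ v : Fin (k + 2) → X, (∀ i, v i ∉ B) → gd G (gdelta w ω) v = 0)
    (hbv : ∀ v : Fin (k + 2) → X, IsBdryTuple G B v → ω v = φ v)
    (C : ℝ)
    (hC : ∀ u : Fin (k + 1) → X, IsTupleClique G u → (∀ i, u i ∉ B) →
      (∑ v : X, if v ∈ B then w.w (Fin.cons v u) else 0) / w.w u ≤ C) :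
    Real.sqrt (innerBdry w B (Dop (gdelta w ω)) (Dop (gdelta w ω))) ≤
      C * Real.sqrt (innerBdry w B φ φ) := by
  classical
  obtain ⟨hω0, hωskew⟩ := hω
  have hwnn : ∀ {m : ℕ} (v : Fin (m+1) → X), 0 ≤ w.w v := fun v => w_nonneg w v
  set dω : (Fin (k+1) → X) → ℝ := gdelta w ω with hdωdef
  set c : (Fin (k+2) → X) → ℝ :=
    fun v => if v 0 ∈ B ∧ ∀ i : Fin (k+1), v i.succ ∉ B then (1:ℝ) else 0 with hcdef
  set ι : (Fin (k+1) → X) → ℝ := fun u => if ∀ i, u i ∉ B then (1:ℝ) else 0 with hιdef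
  set ιv : (Fin (k+2) → X) → ℝ := fun v => if ∀ i, v i ∉ B then (1:ℝ) else 0 with hιvdef
  set A : ℝ := ∑ v : Fin (k+2) → X, c v * (dω (Fin.tail v) * dω (Fin.tail v) * w.w v)
    with hAdef
  set P : ℝ := ∑ v : Fin (k+2) → X, c v * (φ v * φ v * w.w v) with hPdef
  set Ib : ℝ := ∑ v : Fin (k+2) → X, c v * (dω (Fin.tail v) * φ v * w.w v) with hIbdef
  set I : ℝ := ∑ u : Fin (k+1) → X, ι u * (dω u * dω u * w.w u) with hIdef
  set J : ℝ := ∑ v : Fin (k+2) → X, ιv v * (ω v * (w.w v * dω (Fin.tail v))) with hJdef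
  have hcnn : ∀ v : Fin (k+2) → X, 0 ≤ c v := by
    intro v; simp only [hcdef]; split <;> norm_num
  have hA0 : 0 ≤ A := by
    rw [hAdef]
    exact Finset.sum_nonneg fun v _ =>
      mul_nonneg (hcnn v) (mul_nonneg (mul_self_nonneg _) (hwnn v))
  have hP0 : 0 ≤ P := by
    rw [hPdef]
    exact Finset.sum_nonneg fun v _ =>
      mul_nonneg (hcnn v) (mul_nonneg (mul_self_nonneg _) (hwnn v))
  have hkey : ∀ u : Fin (k+1) → X,
      dω u * dω u * w.w u = dω u * ∑ x : X, ω (Fin.cons x u) * w.w (Fin.cons x u) := by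
    intro u; rw [hdωdef]; exact gdelta_mul_self_mul w ω u
  -- ### Step 1: J = 0 (harmonicity / integration by parts in the interior)
  have h1 : ∀ v : Fin (k+2) → X, ιv v * (ω v * (w.w v * gd G dω v)) = 0 := by
    intro v
    by_cases hv : ∀ i, v i ∉ B
    · rw [hharm v hv]; ring
    · simp [hιvdef, hv]
  have h3 : ∀ v : Fin (k+2) → X,
      ιv v * (ω v * (w.w v * gd G dω v))
        = ∑ j : Fin (k+2), (-1:ℝ)^(j:ℕ) * (ιv v * (ω v * (w.w v * dω (v ∘ j.succAbove)))) := by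
    intro v
    by_cases hcl : IsTupleClique G v
    · simp only [gd, cliqueInd, if_pos hcl, one_mul, Finset.mul_sum]
      exact Finset.sum_congr rfl fun j _ => by ring
    · rw [w.eq_zero v hcl]
      simp
  have h2 : ∑ v : Fin (k+2) → X, ∑ j : Fin (k+2),
      (-1:ℝ)^(j:ℕ) * (ιv v * (ω v * (w.w v * dω (v ∘ j.succAbove)))) = 0 :=
    (Finset.sum_congr rfl fun v _ => (h3 v).symm).trans
      (Finset.sum_eq_zero fun v _ => h1 v)
  rw [Finset.sum_comm] at h2
  have h4 : ∀ j : Fin (k+2),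
      ∑ v : Fin (k+2) → X, (-1:ℝ)^(j:ℕ) * (ιv v * (ω v * (w.w v * dω (v ∘ j.succAbove)))) = J := by
    intro j
    rw [← sum_comp_perm (Fin.cycleRange j)
      (fun v : Fin (k+2) → X => (-1:ℝ)^(j:ℕ) * (ιv v * (ω v * (w.w v * dω (v ∘ j.succAbove)))))]
    rw [hJdef]
    refine Finset.sum_congr rfl fun v _ => ?_
    have earg : (v ∘ ⇑(Fin.cycleRange j)) ∘ j.succAbove = Fin.tail v := by
      funext i
      show v (Fin.cycleRange j (j.succAbove i)) = v i.succ
      rw [Fin.cycleRange_succAbove]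
    have eiv : ιv (v ∘ ⇑(Fin.cycleRange j)) = ιv v := by
      simp only [hιvdef]
      have hiff : (∀ i, (v ∘ ⇑(Fin.cycleRange j)) i ∉ B) ↔ ∀ i, v i ∉ B :=
        ⟨fun h i => by simpa using h ((Fin.cycleRange j).symm i), fun h i => h _⟩
      simp only [hiff]
    rw [earg, eiv, hωskew (Fin.cycleRange j) v, w.symm (Fin.cycleRange j) v, esign j]
    have hsq : (-1:ℝ)^(j:ℕ) * (-1:ℝ)^(j:ℕ) = 1 := by rw [← mul_pow]; norm_num
    linear_combination (ιv v * (ω v * (w.w v * dω (Fin.tail v)))) * hsq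
  have h5 : ∑ _j : Fin (k+2), J = 0 :=
    (Finset.sum_congr rfl fun j _ => (h4 j).symm).trans h2
  have hJ0 : J = 0 := by
    rw [Finset.sum_const, Finset.card_univ, Fintype.card_fin, nsmul_eq_mul] at h5
    have hk : ((k+2 : ℕ) : ℝ) ≠ 0 := by positivity
    exact (mul_eq_zero.mp h5).resolve_left hk
  -- ### Step 2: Green's identity I = Ib
  have step1 : I = ∑ u : Fin (k+1) → X, ∑ x : X,
      ι u * dω u * (ω (Fin.cons x u) * w.w (Fin.cons x u)) := by
    rw [hIdef]
    refine Finset.sum_congr rfl fun u _ => ?_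
    rw [hkey u, ← Finset.mul_sum]
    ring
  set Sb : ℝ := ∑ u : Fin (k+1) → X, ∑ x : X,
    (if x ∈ B then ι u * dω u * (ω (Fin.cons x u) * w.w (Fin.cons x u)) else 0) with hSbdef
  set Si : ℝ := ∑ u : Fin (k+1) → X, ∑ x : X,
    (if x ∈ B then 0 else ι u * dω u * (ω (Fin.cons x u) * w.w (Fin.cons x u))) with hSidef
  have step3 : I = Sb + Si := by
    rw [step1, hSbdef, hSidef, ← Finset.sum_add_distrib]
    refine Finset.sum_congr rfl fun u _ => ?_
    rw [← Finset.sum_add_distrib]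
    refine Finset.sum_congr rfl fun x _ => ?_
    by_cases h : x ∈ B <;> simp [h]
  have hSi : Si = J := by
    rw [hSidef, Finset.sum_comm, hJdef, sum_pi_succ
      (fun v : Fin (k+2) → X => ιv v * (ω v * (w.w v * dω (Fin.tail v))))]
    refine Finset.sum_congr rfl fun x _ => Finset.sum_congr rfl fun u _ => ?_
    have hcond : (∀ i : Fin (k+2), (Fin.cons x u : Fin (k+2) → X) i ∉ B)
        ↔ (x ∉ B ∧ ∀ i : Fin (k+1), u i ∉ B) := by
      rw [Fin.forall_fin_succ]
      simp
    simp only [hιvdef, hιdef, Fin.tail_cons, hcond]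
    by_cases hx : x ∈ B
    · simp [hx]
    · by_cases hu : ∀ i : Fin (k+1), u i ∉ B
      · simp only [hx, hu, if_neg, if_pos, and_self, not_false_iff]
        simp [hu]
        ring
      · simp [hx, hu]
  have hSb : Sb = Ib := by
    rw [hSbdef, Finset.sum_comm, hIbdef, sum_pi_succ
      (fun v : Fin (k+2) → X => c v * (dω (Fin.tail v) * φ v * w.w v))]
    refine Finset.sum_congr rfl fun x _ => Finset.sum_congr rfl fun u _ => ?_
    have hcondc : ((Fin.cons x u : Fin (k+2) → X) 0 ∈ B ∧
        ∀ i : Fin (k+1), (Fin.cons x u : Fin (k+2) → X) i.succ ∉ B)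
        ↔ (x ∈ B ∧ ∀ i : Fin (k+1), u i ∉ B) := by
      simp
    simp only [hcdef, hιdef, Fin.tail_cons, hcondc]
    by_cases hx : x ∈ B
    · by_cases hu : ∀ i : Fin (k+1), u i ∉ B
      · have hωφ : ω (Fin.cons x u) * w.w (Fin.cons x u)
            = φ (Fin.cons x u) * w.w (Fin.cons x u) := by
          by_cases hcl : IsTupleClique G (Fin.cons x u)
          · rw [hbv _ ⟨hcl, by simpa using hx, fun i => by simpa using hu i⟩]
          · rw [w.eq_zero _ hcl]; ring
        simp only [hx, hu, if_pos, and_self]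
        simp [hu]
        linear_combination dω u * hωφ
      · simp [hx, hu]
    · simp [hx]
  have hGreen : I = Ib := by rw [step3, hSi, hJ0, hSb, add_zero]
  -- ### Step 3: A ≤ C * I
  have hA2 : A = ∑ u : Fin (k+1) → X, (ι u * (dω u * dω u)) *
      ∑ x : X, (if x ∈ B then w.w (Fin.cons x u) else 0) := by
    rw [hAdef, sum_pi_succ
      (fun v : Fin (k+2) → X => c v * (dω (Fin.tail v) * dω (Fin.tail v) * w.w v)),
      Finset.sum_comm]
    refine Finset.sum_congr rfl fun u _ => ?_
    rw [Finset.mul_sum]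
    refine Finset.sum_congr rfl fun x _ => ?_
    have hcondc : ((Fin.cons x u : Fin (k+2) → X) 0 ∈ B ∧
        ∀ i : Fin (k+1), (Fin.cons x u : Fin (k+2) → X) i.succ ∉ B)
        ↔ (x ∈ B ∧ ∀ i : Fin (k+1), u i ∉ B) := by
      simp
    simp only [hcdef, hιdef, Fin.tail_cons, hcondc]
    by_cases hx : x ∈ B <;> by_cases hu : ∀ i : Fin (k+1), u i ∉ B <;>
      simp [hx, hu] <;> ring
  have hTu : ∀ u : Fin (k+1) → X,
      (ι u * (dω u * dω u)) * (∑ x : X, if x ∈ B then w.w (Fin.cons x u) else 0)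
        ≤ (ι u * (dω u * dω u)) * (C * w.w u) := by
    intro u
    by_cases hint : ∀ i, u i ∉ B
    · have hι1 : ι u = 1 := by simp [hιdef, hint]
      have hnn : 0 ≤ ι u * (dω u * dω u) := by
        rw [hι1, one_mul]; exact mul_self_nonneg _
      by_cases hcl : IsTupleClique G u
      · have hw : 0 < w.w u := w.pos u hcl
        have hdiv := hC u hcl hint
        have hT : (∑ x : X, if x ∈ B then w.w (Fin.cons x u) else 0) ≤ C * w.w u := by
          rw [div_le_iff₀ hw] at hdiv
          linarith
        exact mul_le_mul_of_nonneg_left hT hnn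
      · have hz : ∀ x : X, (if x ∈ B then w.w (Fin.cons x u) else 0) = 0 := by
          intro x
          split
          · apply w.eq_zero
            intro hconcl
            have := clique_tail hconcl
            rw [Fin.tail_cons] at this
            exact hcl this
          · rfl
        rw [Finset.sum_eq_zero fun x _ => hz x, w.eq_zero u hcl]
        simp
    · simp [hιdef, hint]
  have hAC : A ≤ C * I := by
    rw [hA2]
    calc ∑ u : Fin (k+1) → X, (ι u * (dω u * dω u)) *
          ∑ x : X, (if x ∈ B then w.w (Fin.cons x u) else 0)
        ≤ ∑ u : Fin (k+1) → X, (ι u * (dω u * dω u)) * (C * w.w u) :=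
          Finset.sum_le_sum fun u _ => hTu u
      _ = C * I := by
          rw [hIdef, Finset.mul_sum]
          exact Finset.sum_congr rfl fun u _ => by ring
  -- ### Step 4: Cauchy–Schwarz
  have hsqrt : ∀ v : Fin (k+2) → X,
      Real.sqrt (c v * w.w v) * Real.sqrt (c v * w.w v) = c v * w.w v :=
    fun v => Real.mul_self_sqrt (mul_nonneg (hcnn v) (hwnn v))
  have hCS : Ib ^ 2 ≤ A * P := by
    have h := Finset.sum_mul_sq_le_sq_mul_sq Finset.univ
      (fun v : Fin (k+2) → X => dω (Fin.tail v) * Real.sqrt (c v * w.w v))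
      (fun v : Fin (k+2) → X => φ v * Real.sqrt (c v * w.w v))
    have e1 : ∑ v : Fin (k+2) → X,
        (dω (Fin.tail v) * Real.sqrt (c v * w.w v)) * (φ v * Real.sqrt (c v * w.w v)) = Ib := by
      rw [hIbdef]
      refine Finset.sum_congr rfl fun v _ => ?_
      rw [show (dω (Fin.tail v) * Real.sqrt (c v * w.w v)) * (φ v * Real.sqrt (c v * w.w v))
          = dω (Fin.tail v) * φ v * (Real.sqrt (c v * w.w v) * Real.sqrt (c v * w.w v)) by ring,
        hsqrt v]
      ring
    have e2 : ∑ v : Fin (k+2) → X, (dω (Fin.tail v) * Real.sqrt (c v * w.w v)) ^ 2 = A := by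
      rw [hAdef]
      refine Finset.sum_congr rfl fun v _ => ?_
      rw [show (dω (Fin.tail v) * Real.sqrt (c v * w.w v)) ^ 2
          = dω (Fin.tail v) * dω (Fin.tail v)
            * (Real.sqrt (c v * w.w v) * Real.sqrt (c v * w.w v)) by ring,
        hsqrt v]
      ring
    have e3 : ∑ v : Fin (k+2) → X, (φ v * Real.sqrt (c v * w.w v)) ^ 2 = P := by
      rw [hPdef]
      refine Finset.sum_congr rfl fun v _ => ?_
      rw [show (φ v * Real.sqrt (c v * w.w v)) ^ 2
          = φ v * φ v * (Real.sqrt (c v * w.w v) * Real.sqrt (c v * w.w v)) by ring,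
        hsqrt v]
      ring
    rw [e1, e2, e3] at h
    exact h
  -- ### Step 5: conclusion
  have key : Real.sqrt A ≤ C * Real.sqrt P := by
    rcases eq_or_lt_of_le hP0 with hP | hP
    · have hIb0 : Ib = 0 := by
        have h6 : Ib ^ 2 ≤ 0 := by
          rw [← hP, mul_zero] at hCS
          exact hCS
        have h7 : Ib ^ 2 = 0 := le_antisymm h6 (sq_nonneg Ib)
        exact pow_eq_zero_iff (two_ne_zero) |>.mp h7
      have hA0' : A = 0 := by
        rw [hGreen, hIb0, mul_zero] at hAC
        exact le_antisymm hAC hA0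
      rw [hA0', ← hP, Real.sqrt_zero, mul_zero]
    · have hCpos : 0 < C := by
        obtain ⟨v, -, hv⟩ : ∃ v ∈ (Finset.univ : Finset (Fin (k+2) → X)),
            0 < c v * (φ v * φ v * w.w v) := by
          by_contra hcon
          push_neg at hcon
          have : P ≤ 0 := by
            rw [hPdef]
            exact Finset.sum_nonpos fun v hvmem => hcon v hvmem
          linarith
        have hc1 : v 0 ∈ B ∧ ∀ i : Fin (k+1), v i.succ ∉ B := by
          by_contra hcond
          simp only [hcdef] at hv
          rw [if_neg hcond] at hv
          simp at hv
        have hwv : 0 < w.w v := by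
          rcases (hwnn v).lt_or_eq with h | h
          · exact h
          · exfalso
            rw [← h, mul_zero] at hv
            simp at hv
        have hcl : IsTupleClique G v := by
          by_contra hcl
          exact absurd (w.eq_zero v hcl) (ne_of_gt hwv)
        have hclt : IsTupleClique G (Fin.tail v) := clique_tail hcl
        have hintt : ∀ i, Fin.tail v i ∉ B := fun i => hc1.2 i
        have hwt : 0 < w.w (Fin.tail v) := w.pos _ hclt
        have hTpos : 0 < ∑ x : X, (if x ∈ B then w.w (Fin.cons x (Fin.tail v)) else 0) := by
          have hterm : 0 < (if v 0 ∈ B then w.w (Fin.cons (v 0) (Fin.tail v)) else 0) := by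
            rw [if_pos hc1.1, Fin.cons_self_tail]
            exact hwv
          refine lt_of_lt_of_le hterm (Finset.single_le_sum
            (f := fun x => if x ∈ B then w.w (Fin.cons x (Fin.tail v)) else 0)
            (fun x _ => ?_) (Finset.mem_univ (v 0)))
          split
          · exact hwnn _
          · exact le_refl 0
        calc (0:ℝ) < (∑ x : X, if x ∈ B then w.w (Fin.cons x (Fin.tail v)) else 0)
              / w.w (Fin.tail v) := div_pos hTpos hwt
          _ ≤ C := hC (Fin.tail v) hclt hintt
      rcases hA0.lt_or_eq with hApos | hA0'
      · have hIb_le : Ib ≤ Real.sqrt A * Real.sqrt P := by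
          have hh1 : Ib ≤ |Ib| := le_abs_self Ib
          have hh2 : |Ib| = Real.sqrt (Ib ^ 2) := (Real.sqrt_sq_eq_abs Ib).symm
          have hh3 : Real.sqrt (Ib ^ 2) ≤ Real.sqrt (A * P) := Real.sqrt_le_sqrt hCS
          rw [Real.sqrt_mul hA0] at hh3
          linarith
        have hA_le : A ≤ C * (Real.sqrt A * Real.sqrt P) := by
          calc A ≤ C * I := hAC
            _ = C * Ib := by rw [hGreen]
            _ ≤ C * (Real.sqrt A * Real.sqrt P) :=
              mul_le_mul_of_nonneg_left hIb_le hCpos.le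
        have hsA : 0 < Real.sqrt A := Real.sqrt_pos.mpr hApos
        have hfin : Real.sqrt A * Real.sqrt A ≤ (C * Real.sqrt P) * Real.sqrt A := by
          calc Real.sqrt A * Real.sqrt A = A := Real.mul_self_sqrt hA0
            _ ≤ C * (Real.sqrt A * Real.sqrt P) := hA_le
            _ = (C * Real.sqrt P) * Real.sqrt A := by ring
        exact le_of_mul_le_mul_right hfin hsA
      · rw [← hA0', Real.sqrt_zero]
        positivity
  have hNnn : (0:ℝ) ≤ (((k+1).factorial : ℝ))⁻¹ := by positivity
  have hgoalA : innerBdry w B (Dop dω) (Dop dω) = (((k+1).factorial : ℝ))⁻¹ * A := by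
    rw [hAdef]; rfl
  have hgoalP : innerBdry w B φ φ = (((k+1).factorial : ℝ))⁻¹ * P := by
    rw [hPdef]; rfl
  rw [hgoalA, hgoalP, Real.sqrt_mul hNnn, Real.sqrt_mul hNnn]
  calc Real.sqrt (((k+1).factorial : ℝ))⁻¹ * Real.sqrt A
      ≤ Real.sqrt (((k+1).factorial : ℝ))⁻¹ * (C * Real.sqrt P) :=
        mul_le_mul_of_nonneg_left key (Real.sqrt_nonneg _)
    _ = C * (Real.sqrt (((k+1).factorial : ℝ))⁻¹ * Real.sqrt P) := by ring


end GraphHodge
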